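/- There exists a constant c > 0 such that for every integer d ≥ 1, w_d − w_{d+1} ≥ c · 3^{(d+1)/2} / Γ((d+3)/2), where Γ is the Gamma function. -/

import Mathlib

open MeasureTheory Metric Filter

noncomputable section

abbrev Euc (d : ℕ) := EuclideanSpace ℝ (Fin d)

/-- `w_d`: the probability that two independent random vectors, each uniformly distributed
on the closed unit ball of ℝ^d, are within distance 1 of each other; equivalently, the
2d-dimensional volume of `{(x,y) : x,y ∈ B(0,1), ‖x-y‖ ≤ 1}` divided by `V_d ^ 2`. -/
def ballPairProb (d : ℕ) : ℝ :=
  (volume {p : Euc d × Euc d |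
      p.1 ∈ closedBall 0 1 ∧ p.2 ∈ closedBall 0 1 ∧ dist p.1 p.2 ≤ 1}).toReal /
    ((volume (closedBall (0 : Euc d) 1)).toReal) ^ 2

namespace BallGap

open Real Set
open scoped ENNReal NNReal


lemma norm_sq_eq {d : ℕ} (x : Euc d) : ‖x‖ ^ 2 = ∑ i, x i ^ 2 := by
  rw [EuclideanSpace.norm_eq, Real.sq_sqrt (by positivity)]
  simp [Real.norm_eq_abs, sq_abs]

def sliceEquiv (n : ℕ) : Euc (n+1) ≃ᵐ ℝ × Euc n :=
  (MeasurableEquiv.toLp 2 (Fin (n+1) → ℝ)).symm.trans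
    ((MeasurableEquiv.piFinSuccAbove (fun _ : Fin (n+1) => ℝ) 0).trans
      ((MeasurableEquiv.refl ℝ).prodCongr (MeasurableEquiv.toLp 2 (Fin n → ℝ))))

lemma sliceEquiv_mp (n : ℕ) : MeasurePreserving (sliceEquiv n) volume volume := by
  have h1 := EuclideanSpace.volume_preserving_symm_measurableEquiv_toLp (Fin (n+1))
  have h2 := volume_preserving_piFinSuccAbove (fun _ : Fin (n+1) => ℝ) 0
  have h3 : MeasurePreserving
      ((MeasurableEquiv.refl ℝ).prodCongr (MeasurableEquiv.toLp 2 (Fin n → ℝ)))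
      volume volume := by
    have := (MeasurePreserving.id (volume : Measure ℝ)).prod
      (EuclideanSpace.volume_preserving_symm_measurableEquiv_toLp (Fin n)).symm
    rw [← Measure.volume_eq_prod] at this
    exact this
  exact (h3.comp h2).comp h1


lemma sliceEquiv_fst {n : ℕ} (x : Euc (n+1)) : (sliceEquiv n x).1 = x 0 := rfl
lemma sliceEquiv_snd {n : ℕ} (x : Euc (n+1)) (j : Fin n) : (sliceEquiv n x).2 j = x j.succ := rfl

lemma norm_sub_sq' {n : ℕ} (c : ℝ) (x : Euc (n+1)) :
    ‖x - c • EuclideanSpace.single 0 1‖ ^ 2 = (x 0 - c) ^ 2 + ‖(sliceEquiv n x).2‖ ^ 2 := by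
  set y : Euc (n+1) := x - c • EuclideanSpace.single 0 1 with hy
  rw [norm_sq_eq, norm_sq_eq ((sliceEquiv n x).2), Fin.sum_univ_succ]
  have h0 : y 0 = x 0 - c := by
    rw [hy]; simp [EuclideanSpace.single_apply]
  have hs : ∀ j : Fin n, y j.succ = x j.succ := by
    intro j
    rw [hy]; simp [EuclideanSpace.single_apply, (Fin.succ_ne_zero j)]
  rw [h0]
  congr 1
  refine Finset.sum_congr rfl fun j _ => ?_
  rw [hs j, sliceEquiv_snd]

lemma mem_cb_iff {n : ℕ} (c : ℝ) (x : Euc (n+1)) :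
    x ∈ closedBall (c • EuclideanSpace.single 0 1) 1 ↔
      ((sliceEquiv n x).1 - c) ^ 2 + ‖(sliceEquiv n x).2‖ ^ 2 ≤ 1 := by
  rw [mem_closedBall, dist_eq_norm, sliceEquiv_fst, ← norm_sub_sq']
  constructor
  · intro h; nlinarith [norm_nonneg (x - c • EuclideanSpace.single 0 1)]
  · intro h; nlinarith [norm_nonneg (x - c • EuclideanSpace.single 0 1)]

/-- slice formula for the volume of the intersection of two balls -/
lemma slice_vol (n : ℕ) (r : ℝ) :
    volume (closedBall (0 : Euc (n+1)) 1 ∩ closedBall (r • EuclideanSpace.single 0 1) 1)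
      = ∫⁻ t : ℝ, volume {z : Euc n | ‖z‖ ^ 2 ≤ 1 - max (t ^ 2) ((t - r) ^ 2)} := by
  set A : Set (ℝ × Euc n) :=
    {p | p.1 ^ 2 + ‖p.2‖ ^ 2 ≤ 1 ∧ (p.1 - r) ^ 2 + ‖p.2‖ ^ 2 ≤ 1} with hA
  have hAmeas : MeasurableSet A := by
    apply IsClosed.measurableSet
    apply IsClosed.inter
    · exact isClosed_le ((continuous_fst.pow 2).add ((continuous_snd.norm).pow 2))
        continuous_const
    · exact isClosed_le (((continuous_fst.sub continuous_const).pow 2).add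
        ((continuous_snd.norm).pow 2)) continuous_const
  have hset : closedBall (0 : Euc (n+1)) 1 ∩ closedBall (r • EuclideanSpace.single 0 1) 1
      = sliceEquiv n ⁻¹' A := by
    ext x
    have h0 : x ∈ closedBall (0 : Euc (n+1)) 1 ↔
        ((sliceEquiv n x).1 - 0) ^ 2 + ‖(sliceEquiv n x).2‖ ^ 2 ≤ 1 := by
      simpa using mem_cb_iff 0 x
    simp only [Set.mem_inter_iff, Set.mem_preimage, hA, Set.mem_setOf_eq, h0, mem_cb_iff r x,
      sub_zero]
  rw [hset, (sliceEquiv_mp n).measure_preimage hAmeas.nullMeasurableSet]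
  rw [Measure.volume_eq_prod, Measure.prod_apply hAmeas]
  refine lintegral_congr fun t => ?_
  congr 1
  ext z
  simp only [Set.mem_preimage, hA, Set.mem_setOf_eq, Set.mem_setOf_eq]
  constructor
  · rintro ⟨h1, h2⟩
    have : max (t ^ 2) ((t - r) ^ 2) ≤ 1 - ‖z‖ ^ 2 :=
      max_le (by linarith) (by linarith)
    linarith
  · intro h
    have h1 : t ^ 2 ≤ max (t ^ 2) ((t - r) ^ 2) := le_max_left _ _
    have h2 : (t - r) ^ 2 ≤ max (t ^ 2) ((t - r) ^ 2) := le_max_right _ _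
    constructor <;> linarith

/-- measure of a sublevel set of `‖z‖^2` -/
def q (n : ℕ) (c : ℝ) : ℝ≥0∞ := volume {z : Euc n | ‖z‖ ^ 2 ≤ c}

lemma q_mono (n : ℕ) : Monotone (q n) := by
  intro c c' h
  exact measure_mono fun z hz => le_trans hz h

lemma q_measurable (n : ℕ) : Measurable (q n) := (q_mono n).measurable

lemma q_eq (n : ℕ) (c : ℝ) :
    q n c = if 0 ≤ c then ENNReal.ofReal (Real.sqrt c ^ n) * volume (closedBall (0 : Euc n) 1)
      else 0 := by
  rcases le_or_gt 0 c with hc | hc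
  · rw [if_pos hc]
    have hset : {z : Euc n | ‖z‖ ^ 2 ≤ c} = closedBall 0 (Real.sqrt c) := by
      ext z
      simp only [Set.mem_setOf_eq, mem_closedBall, dist_zero_right]
      rw [← Real.le_sqrt (norm_nonneg z)]
      exact hc
    rw [q, hset, Measure.addHaar_closedBall' volume 0 (Real.sqrt_nonneg c),
      finrank_euclideanSpace_fin]
  · rw [if_neg (not_le.2 hc), q]
    convert measure_empty
    · ext z
      simp only [Set.mem_setOf_eq, Set.mem_empty_iff_false, iff_false, not_le]
      exact lt_of_lt_of_le hc (by positivity)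
    · infer_instance

lemma slice_vol2 (n : ℕ) {r : ℝ} (hr : 0 ≤ r) :
    volume (closedBall (0 : Euc (n+1)) 1 ∩ closedBall (r • EuclideanSpace.single 0 1) 1)
      = 2 * ∫⁻ t in Ioi (r/2), q n (1 - t ^ 2) := by
  rw [slice_vol]
  have hmeas : Measurable fun t : ℝ => volume {z : Euc n | ‖z‖ ^ 2 ≤ 1 - max (t ^ 2) ((t - r) ^ 2)} := by
    exact (q_measurable n).comp (by fun_prop)
  rw [← lintegral_add_compl
    (fun t : ℝ => volume {z : Euc n | ‖z‖ ^ 2 ≤ 1 - max (t ^ 2) ((t - r) ^ 2)})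
    (measurableSet_Iic (a := r/2))]
  have hIic : ∫⁻ t in Iic (r/2), volume {z : Euc n | ‖z‖ ^ 2 ≤ 1 - max (t ^ 2) ((t - r) ^ 2)}
      = ∫⁻ t in Ioi (r/2), q n (1 - t ^ 2) := by
    have h1 : ∀ t ∈ Iic (r/2),
        volume {z : Euc n | ‖z‖ ^ 2 ≤ 1 - max (t ^ 2) ((t - r) ^ 2)} = q n (1 - (r - t) ^ 2) := by
      intro t ht
      simp only [Set.mem_Iic] at ht
      have hmax : max (t ^ 2) ((t - r) ^ 2) = (r - t) ^ 2 := by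
        rw [max_eq_right (by nlinarith)]
        ring
      rw [hmax]; rfl
    rw [setLIntegral_congr_fun measurableSet_Iic h1]
    have hmp : MeasurePreserving (fun t : ℝ => r - t) volume volume := by
      have := (measurePreserving_add_left (volume : Measure ℝ) r).comp
        (Measure.measurePreserving_neg (volume : Measure ℝ))
      simpa [Function.comp_def, sub_eq_add_neg] using this
    have hgm : Measurable fun u : ℝ => q n (1 - u ^ 2) :=
      (q_measurable n).comp (by fun_prop)
    have hpre : Iic (r/2) = (fun t : ℝ => r - t) ⁻¹' (Ici (r/2)) := by
      ext t
      simp only [Set.mem_Iic, Set.mem_preimage, Set.mem_Ici]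
      constructor <;> intro h <;> linarith
    calc ∫⁻ t in Iic (r/2), q n (1 - (r - t) ^ 2)
        = ∫⁻ t in (fun t : ℝ => r - t) ⁻¹' (Ici (r/2)), q n (1 - (r - t) ^ 2) := by rw [← hpre]
      _ = ∫⁻ u in Ici (r/2), q n (1 - u ^ 2) := by
          rw [← setLIntegral_map measurableSet_Ici hgm hmp.measurable, hmp.map_eq]
      _ = ∫⁻ u in Ioi (r/2), q n (1 - u ^ 2) := by
          rw [Measure.restrict_congr_set Ioi_ae_eq_Ici.symm]
  have hIoi : ∫⁻ t in (Iic (r/2))ᶜ, volume {z : Euc n | ‖z‖ ^ 2 ≤ 1 - max (t ^ 2) ((t - r) ^ 2)}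
      = ∫⁻ t in Ioi (r/2), q n (1 - t ^ 2) := by
    rw [compl_Iic]
    refine setLIntegral_congr_fun measurableSet_Ioi ?_
    intro t ht
    beta_reduce
    simp only [Set.mem_Ioi] at ht
    have hmax : max (t ^ 2) ((t - r) ^ 2) = t ^ 2 := by
      rw [max_eq_left (by nlinarith)]
    rw [hmax]; rfl
  rw [hIic, hIoi, two_mul]

lemma interVol_eq (n : ℕ) {r : ℝ} (hr : 0 ≤ r) (hr2 : r ≤ 2) :
    volume (closedBall (0 : Euc (n+1)) 1 ∩ closedBall (r • EuclideanSpace.single 0 1) 1)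
      = ENNReal.ofReal (2 * ∫ t in (r/2)..1, Real.sqrt (1 - t ^ 2) ^ n) *
        volume (closedBall (0 : Euc n) 1) := by
  rw [slice_vol2 n hr]
  have h12 : r / 2 ≤ 1 := by linarith
  rw [← Ioc_union_Ioi_eq_Ioi h12, lintegral_union measurableSet_Ioi (Ioc_disjoint_Ioi le_rfl)]
  have hI2 : ∫⁻ t in Ioi (1:ℝ), q n (1 - t ^ 2) = 0 := by
    rw [setLIntegral_congr_fun measurableSet_Ioi fun t ht => ?_,
      lintegral_zero]
    simp only [Set.mem_Ioi] at ht
    rw [q_eq, if_neg (by nlinarith)]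
  have hcont : Continuous fun t : ℝ => Real.sqrt (1 - t ^ 2) ^ n :=
    ((continuous_const.sub (continuous_pow 2)).sqrt).pow n
  have hI1 : ∫⁻ t in Ioc (r/2) 1, q n (1 - t ^ 2)
      = ENNReal.ofReal (∫ t in (r/2)..1, Real.sqrt (1 - t ^ 2) ^ n) *
        volume (closedBall (0 : Euc n) 1) := by
    have hptw : ∀ t ∈ Ioc (r/2) 1, q n (1 - t ^ 2)
        = ENNReal.ofReal (Real.sqrt (1 - t ^ 2) ^ n) * volume (closedBall (0 : Euc n) 1) := by
      intro t ht
      obtain ⟨ht1, ht2⟩ := ht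
      have h0 : (0:ℝ) ≤ 1 - t ^ 2 := by nlinarith [lt_of_le_of_lt (by linarith : 0 ≤ r/2) ht1]
      rw [q_eq, if_pos h0]
    rw [setLIntegral_congr_fun measurableSet_Ioc hptw,
      lintegral_mul_const _ (by exact (ENNReal.measurable_ofReal.comp hcont.measurable))]
    congr 1
    rw [← ofReal_integral_eq_lintegral_ofReal (hcont.integrableOn_Ioc)
      (Filter.Eventually.of_forall fun t => by positivity),
      intervalIntegral.integral_of_le h12]
  rw [hI1, hI2, add_zero, ← mul_assoc]
  congr 1
  rw [ENNReal.ofReal_mul (by norm_num : (0:ℝ) ≤ 2)]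
  norm_num

lemma interVol_norm (n : ℕ) (x : Euc (n+1)) :
    volume (closedBall (0 : Euc (n+1)) 1 ∩ closedBall x 1)
      = volume (closedBall (0 : Euc (n+1)) 1 ∩
          closedBall (‖x‖ • EuclideanSpace.single 0 1) 1) := by
  rcases eq_or_ne x 0 with rfl | hx
  · simp
  · set w : Euc (n+1) := ‖x‖ • EuclideanSpace.single 0 1 with hw
    have hnw : ‖w‖ = ‖x‖ := by
      rw [hw, norm_smul, EuclideanSpace.norm_single, norm_one, mul_one, norm_norm]
    set R := Submodule.reflection (ℝ ∙ (w - x))ᗮ with hR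
    have hRw : R w = x := Submodule.reflection_sub hnw
    have hmp : MeasurePreserving R volume volume :=
      (Submodule.reflection (ℝ ∙ (w - x))ᗮ).measurePreserving
    have hpre : R ⁻¹' (closedBall (0 : Euc (n+1)) 1 ∩ closedBall x 1)
        = closedBall (0 : Euc (n+1)) 1 ∩ closedBall w 1 := by
      ext z
      simp only [Set.mem_preimage, Set.mem_inter_iff, mem_closedBall, dist_zero_right]
      constructor
      · rintro ⟨h1, h2⟩
        refine ⟨by rwa [(Submodule.reflection _).norm_map z] at h1, ?_⟩
        rw [← hRw] at h2
        rwa [(Submodule.reflection _).dist_map z w] at h2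
      · rintro ⟨h1, h2⟩
        refine ⟨by rwa [(Submodule.reflection _).norm_map z], ?_⟩
        rw [← hRw, (Submodule.reflection _).dist_map z w]
        exact h2
    have hns : NullMeasurableSet (closedBall (0 : Euc (n+1)) 1 ∩ closedBall x 1) volume :=
      ((isClosed_closedBall.inter isClosed_closedBall).measurableSet).nullMeasurableSet
    calc volume (closedBall (0 : Euc (n+1)) 1 ∩ closedBall x 1)
        = volume (R ⁻¹' (closedBall (0 : Euc (n+1)) 1 ∩ closedBall x 1)) :=
          (hmp.measure_preimage hns).symm
      _ = volume (closedBall (0 : Euc (n+1)) 1 ∩ closedBall w 1) := by rw [hpre]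

lemma pairSet_vol (d : ℕ) :
    volume {p : Euc d × Euc d |
        p.1 ∈ closedBall 0 1 ∧ p.2 ∈ closedBall 0 1 ∧ dist p.1 p.2 ≤ 1}
      = ∫⁻ x in closedBall (0 : Euc d) 1,
          volume (closedBall (0 : Euc d) 1 ∩ closedBall x 1) := by
  set S : Set (Euc d × Euc d) :=
    {p | p.1 ∈ closedBall 0 1 ∧ p.2 ∈ closedBall 0 1 ∧ dist p.1 p.2 ≤ 1} with hS
  have hclosed : IsClosed S := by
    refine (isClosed_closedBall.preimage continuous_fst).inter
      ((isClosed_closedBall.preimage continuous_snd).inter ?_)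
    exact isClosed_le (continuous_fst.dist continuous_snd) continuous_const
  have hmeas : MeasurableSet S := hclosed.measurableSet
  rw [Measure.volume_eq_prod, Measure.prod_apply hmeas]
  have h : ∀ x : Euc d, volume (Prod.mk x ⁻¹' S)
      = (closedBall (0 : Euc d) 1).indicator
          (fun x => volume (closedBall (0 : Euc d) 1 ∩ closedBall x 1)) x := by
    intro x
    by_cases hx : x ∈ closedBall (0 : Euc d) 1
    · rw [Set.indicator_of_mem hx]
      congr 1
      ext y
      simp only [Set.mem_preimage, hS, Set.mem_setOf_eq, Set.mem_inter_iff, mem_closedBall]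
      constructor
      · rintro ⟨_, h2, h3⟩; exact ⟨h2, by rwa [dist_comm]⟩
      · rintro ⟨h2, h3⟩; exact ⟨hx, h2, by rwa [dist_comm]⟩
    · rw [Set.indicator_of_notMem hx]
      convert measure_empty
      · ext y; simp only [Set.mem_preimage, hS, Set.mem_setOf_eq, Set.mem_empty_iff_false,
          iff_false]
        rintro ⟨h1, _⟩; exact hx h1
      · infer_instance
  rw [lintegral_congr h, lintegral_indicator measurableSet_closedBall _]

def hfun (n : ℕ) (t : ℝ) : ℝ := Real.sqrt (1 - t ^ 2) ^ n

lemma hfun_cont (n : ℕ) : Continuous (hfun n) :=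
  ((continuous_const.sub (continuous_pow 2)).sqrt).pow n

lemma hfun_nonneg (n : ℕ) (t : ℝ) : 0 ≤ hfun n t := by rw [hfun]; positivity

def Sd (d : ℕ) : ℝ := ∫ θ in (0:ℝ)..(π/3), Real.sin θ ^ d
def Td (d : ℕ) : ℝ := ∫ θ in (0:ℝ)..(π/2), Real.sin θ ^ d

lemma sin_subst {f : ℝ → ℝ} (hf : Continuous f) (a b : ℝ) :
    ∫ θ in a..b, Real.cos θ * f (Real.sin θ) = ∫ t in Real.sin a..Real.sin b, f t := by
  have := intervalIntegral.integral_comp_smul_deriv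
    (f := Real.sin) (f' := Real.cos) (g := f) (a := a) (b := b)
    (fun x _ => Real.hasDerivAt_sin x) Real.continuous_cos.continuousOn hf
  simpa [Function.comp] using this

lemma cos_pow_eq (n : ℕ) {a b : ℝ} (ha : 0 ≤ a) (hb : b ≤ π/2) (hab : a ≤ b) :
    ∫ t in Real.sin a..Real.sin b, hfun n t = ∫ θ in a..b, Real.cos θ ^ (n+1) := by
  rw [← sin_subst (hfun_cont n) a b]
  apply intervalIntegral.integral_congr
  intro θ hθ
  rw [Set.uIcc_of_le hab] at hθ
  have hcos : 0 ≤ Real.cos θ :=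
    Real.cos_nonneg_of_mem_Icc ⟨by linarith [hθ.1, pi_pos], le_trans hθ.2 hb⟩
  have h1 : hfun n (Real.sin θ) = Real.cos θ ^ n := by
    rw [hfun, ← Real.cos_sq', Real.sqrt_sq hcos]
  show Real.cos θ * hfun n (Real.sin θ) = Real.cos θ ^ (n+1)
  rw [h1]
  ring

lemma two_sin_pow_eq (n : ℕ) :
    ∫ t in (0:ℝ)..(1/2), (2*t) ^ (n+1) * hfun n t
      = ∫ θ in (0:ℝ)..(π/6), Real.sin (2*θ) ^ (n+1) := by
  have hf : Continuous fun t : ℝ => (2*t) ^ (n+1) * hfun n t := by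
    exact ((continuous_const.mul continuous_id).pow _).mul (hfun_cont n)
  have h := sin_subst hf 0 (π/6)
  rw [Real.sin_zero, Real.sin_pi_div_six] at h
  rw [← h]
  apply intervalIntegral.integral_congr
  intro θ hθ
  rw [Set.uIcc_of_le (by linarith [pi_pos] : (0:ℝ) ≤ π/6)] at hθ
  have hb : θ ≤ π/2 := le_trans hθ.2 (by linarith [pi_pos])
  have hcos : 0 ≤ Real.cos θ := Real.cos_nonneg_of_mem_Icc ⟨by linarith [hθ.1, pi_pos], hb⟩
  have h1 : hfun n (Real.sin θ) = Real.cos θ ^ n := by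
    rw [hfun, ← Real.cos_sq', Real.sqrt_sq hcos]
  show Real.cos θ * ((2 * Real.sin θ) ^ (n+1) * hfun n (Real.sin θ)) = Real.sin (2*θ) ^ (n+1)
  rw [h1, Real.sin_two_mul, mul_pow]
  ring

lemma cos_to_sin (d : ℕ) {a : ℝ} (ha : a ≤ π/2):
    ∫ θ in a..(π/2), Real.cos θ ^ d = ∫ θ in (0:ℝ)..(π/2 - a), Real.sin θ ^ d := by
  have h1 : ∫ θ in a..(π/2), Real.cos θ ^ d
      = ∫ θ in a..(π/2), Real.sin (π/2 - θ) ^ d := by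
    apply intervalIntegral.integral_congr
    intro θ _
    show Real.cos θ ^ d = Real.sin (π/2 - θ) ^ d
    rw [Real.sin_pi_div_two_sub]
  rw [h1, intervalIntegral.integral_comp_sub_left (fun x => Real.sin x ^ d) (π/2)]
  norm_num

lemma sin_two_int (d : ℕ) :
    ∫ θ in (0:ℝ)..(π/6), Real.sin (2*θ) ^ d = (1/2) * ∫ θ in (0:ℝ)..(π/3), Real.sin θ ^ d := by
  have := intervalIntegral.integral_comp_mul_left (a := (0:ℝ)) (b := π/6)
    (fun x => Real.sin x ^ d) (two_ne_zero)
  rw [this]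
  have h2 : 2 * (π/6) = π/3 := by ring
  rw [mul_zero, h2, smul_eq_mul]
  norm_num

def Hfun (n : ℕ) (r : ℝ) : ℝ := ∫ t in (r/2)..1, hfun n t
def Gfun (n : ℕ) (r : ℝ) : ℝ := 2 * Hfun n r

lemma Hfun_hasDeriv (n : ℕ) (r : ℝ) :
    HasDerivAt (Hfun n) (-(hfun n (r/2) * (1/2))) r := by
  set P : ℝ → ℝ := fun s => ∫ t in (1:ℝ)..s, hfun n t with hP
  have hPd : ∀ s : ℝ, HasDerivAt P (hfun n s) s := by
    intro s
    exact intervalIntegral.integral_hasDerivAt_right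
      ((hfun_cont n).intervalIntegrable _ _)
      ((hfun_cont n).stronglyMeasurableAtFilter _ _)
      (hfun_cont n).continuousAt
  have hH : Hfun n = fun r => -(P (r/2)) := by
    funext u
    rw [Hfun, hP]
    simp only
    rw [← intervalIntegral.integral_symm]
  rw [hH]
  have hcomp : HasDerivAt (fun r : ℝ => P (r/2)) (hfun n (r/2) * (1/2)) r := by
    have hdiv : HasDerivAt (fun x : ℝ => x/2) (1/2) r := (hasDerivAt_id r).div_const 2
    exact (hPd (r/2)).comp r hdiv
  exact hcomp.neg

lemma Hfun_cont (n : ℕ) : Continuous (Hfun n) := by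
  rw [continuous_iff_continuousAt]
  exact fun r => (Hfun_hasDeriv n r).continuousAt

lemma Gfun_cont (n : ℕ) : Continuous (Gfun n) := continuous_const.mul (Hfun_cont n)

lemma Gfun_nonneg (n : ℕ) {r : ℝ} (hr : r ≤ 2) : 0 ≤ Gfun n r := by
  have : 0 ≤ Hfun n r :=
    intervalIntegral.integral_nonneg (by linarith) (fun u _ => hfun_nonneg n u)
  rw [Gfun]; linarith

lemma Hfun_one (n : ℕ) : Hfun n 1 = Sd (n+1) := by
  rw [Hfun]
  have h := cos_pow_eq n (a := π/6) (b := π/2) (by linarith [pi_pos]) le_rfl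
    (by linarith [pi_pos])
  rw [Real.sin_pi_div_six, Real.sin_pi_div_two] at h
  rw [h, cos_to_sin (n+1) (by linarith [pi_pos])]
  have : π/2 - π/6 = π/3 := by ring
  rw [this, Sd]

lemma small_piece (n : ℕ) :
    ∫ t in (0:ℝ)..(1/2), (2*t) ^ (n+1) * hfun n t = (1/2) * Sd (n+1) := by
  rw [two_sin_pow_eq n, sin_two_int (n+1), Sd]

lemma byparts (n : ℕ) :
    ((n:ℝ)+1) * ∫ r in (0:ℝ)..1, r ^ n * Gfun n r = 3 * Sd (n+1) := by
  have h1 : ∫ r in (0:ℝ)..1, r ^ n * Gfun n r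
      = 2 * ∫ r in (0:ℝ)..1, r ^ n * Hfun n r := by
    rw [← intervalIntegral.integral_const_mul]
    apply intervalIntegral.integral_congr
    intro r _
    show r ^ n * Gfun n r = 2 * (r ^ n * Hfun n r)
    rw [Gfun]; ring
  have hbp := intervalIntegral.integral_mul_deriv_eq_deriv_mul
    (u := Hfun n) (u' := fun r => -(hfun n (r/2) * (1/2)))
    (v := fun r => r ^ (n+1)) (v' := fun r => ((n:ℝ)+1) * r ^ n) (a := (0:ℝ)) (b := 1)
    (fun x _ => Hfun_hasDeriv n x)
    (fun x _ => by
      have := hasDerivAt_pow (n+1) x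
      simpa using this)
    (((((hfun_cont n).comp (continuous_id.div_const 2)).mul continuous_const).neg).intervalIntegrable _ _)
    ((continuous_const.mul (continuous_pow n)).intervalIntegrable _ _)
  -- hbp : ∫ x in 0..1, Hfun n x * (((n:ℝ)+1) * x ^ n) = Hfun n 1 * 1^(n+1) - Hfun n 0 * 0^(n+1)
  --        - ∫ x in 0..1, (-(hfun n (x/2) * (1/2))) * x ^ (n+1)
  have h2 : ∫ x in (0:ℝ)..1, Hfun n x * (((n:ℝ)+1) * x ^ n)
      = ((n:ℝ)+1) * ∫ r in (0:ℝ)..1, r ^ n * Hfun n r := by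
    rw [← intervalIntegral.integral_const_mul]
    apply intervalIntegral.integral_congr
    intro r _
    show Hfun n r * (((n:ℝ)+1) * r ^ n) = ((n:ℝ)+1) * (r ^ n * Hfun n r)
    ring
  have h3 : ∫ x in (0:ℝ)..1, (-(hfun n (x/2) * (1/2))) * x ^ (n+1)
      = -(1/2) * ∫ x in (0:ℝ)..1, (fun u => (2*u) ^ (n+1) * hfun n u) (x/2) := by
    rw [← intervalIntegral.integral_const_mul]
    apply intervalIntegral.integral_congr
    intro x _
    show (-(hfun n (x/2) * (1/2))) * x ^ (n+1) = -(1/2) * ((2*(x/2)) ^ (n+1) * hfun n (x/2))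
    have : 2 * (x/2) = x := by ring
    rw [this]
    ring
  have h4 : ∫ x in (0:ℝ)..1, (fun u => (2*u) ^ (n+1) * hfun n u) (x/2)
      = 2 * ∫ u in (0:ℝ)..(1/2), (2*u) ^ (n+1) * hfun n u := by
    have := intervalIntegral.integral_comp_div (a := (0:ℝ)) (b := 1)
      (fun u => (2*u) ^ (n+1) * hfun n u) (two_ne_zero)
    rw [this]
    norm_num
  rw [h2] at hbp
  rw [h1, ← mul_assoc]
  have hcomm : ((n:ℝ)+1) * 2 = 2 * ((n:ℝ)+1) := by ring
  rw [hcomm, mul_assoc, hbp, h3, h4, Hfun_one, small_piece]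
  simp [zero_pow (Nat.succ_ne_zero n)]
  ring

def VB (d : ℕ) : ℝ≥0∞ := volume (closedBall (0 : Euc d) 1)

lemma VB_pos (d : ℕ) : 0 < VB d := by
  rw [VB]
  exact lt_of_lt_of_le (measure_ball_pos volume 0 one_pos) (measure_mono ball_subset_closedBall)

lemma VB_lt_top (d : ℕ) : VB d < ⊤ := (isCompact_closedBall 0 1).measure_lt_top

lemma hfun_integral_Td (n : ℕ) :
    ∫ t in (0:ℝ)..1, Real.sqrt (1 - t ^ 2) ^ n = Td (n+1) := by
  have h2 := cos_pow_eq n (a := 0) (b := π/2) le_rfl le_rfl (by linarith [pi_pos])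
  rw [Real.sin_zero, Real.sin_pi_div_two] at h2
  have hd : ∫ t in (0:ℝ)..1, Real.sqrt (1 - t ^ 2) ^ n = ∫ t in (0:ℝ)..1, hfun n t := rfl
  rw [hd, h2, cos_to_sin (n+1) (by linarith [pi_pos])]
  rw [show π/2 - 0 = π/2 by ring, Td]

lemma VB_succ (n : ℕ) : VB (n+1) = ENNReal.ofReal (2 * Td (n+1)) * VB n := by
  have h := interVol_eq n (r := 0) le_rfl (by norm_num)
  simp only [zero_smul, zero_div] at h
  rw [hfun_integral_Td n] at h
  rw [VB, ← inter_self (closedBall (0 : Euc (n+1)) 1), h, VB]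

lemma W_eq (n : ℕ) :
    volume {p : Euc (n+1) × Euc (n+1) |
        p.1 ∈ closedBall 0 1 ∧ p.2 ∈ closedBall 0 1 ∧ dist p.1 p.2 ≤ 1}
      = ENNReal.ofReal (∫ x in closedBall (0 : Euc (n+1)) 1, Gfun n ‖x‖) * VB n := by
  rw [pairSet_vol]
  have h1 : ∫⁻ x in closedBall (0 : Euc (n+1)) 1,
      volume (closedBall (0 : Euc (n+1)) 1 ∩ closedBall x 1)
      = ∫⁻ x in closedBall (0 : Euc (n+1)) 1, ENNReal.ofReal (Gfun n ‖x‖) * VB n := by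
    refine setLIntegral_congr_fun measurableSet_closedBall ?_
    intro x hx
    beta_reduce
    rw [interVol_norm n x, interVol_eq n (norm_nonneg x)
      (le_trans (mem_closedBall_zero_iff.1 hx) one_le_two)]
    rfl
  have hm : Measurable fun x : Euc (n+1) => ENNReal.ofReal (Gfun n ‖x‖) :=
    ENNReal.measurable_ofReal.comp ((Gfun_cont n).comp continuous_norm).measurable
  rw [h1, lintegral_mul_const _ hm]
  congr 1
  rw [← ofReal_integral_eq_lintegral_ofReal]
  · exact (((Gfun_cont n).comp continuous_norm).continuousOn.integrableOn_compact
      (isCompact_closedBall 0 1))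
  · refine (ae_restrict_iff' measurableSet_closedBall).2 (Filter.Eventually.of_forall ?_)
    intro x hx
    exact Gfun_nonneg n (le_trans (mem_closedBall_zero_iff.1 hx) one_le_two)

lemma radial (n : ℕ) :
    ∫ x in closedBall (0 : Euc (n+1)) 1, Gfun n ‖x‖
      = ((n:ℝ)+1) * (VB (n+1)).toReal * ∫ r in (0:ℝ)..1, r ^ n * Gfun n r := by
  haveI : Nontrivial (Euc (n+1)) := by
    refine ⟨⟨EuclideanSpace.single 0 1, 0, fun h => ?_⟩⟩
    have := congrArg (fun z : Euc (n+1) => z 0) h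
    simp [EuclideanSpace.single_apply] at this
  set f₀ : ℝ → ℝ := Set.indicator (Icc (0:ℝ) 1) (Gfun n) with hf₀
  have hind : ∫ x in closedBall (0 : Euc (n+1)) 1, Gfun n ‖x‖ = ∫ x : Euc (n+1), f₀ ‖x‖ := by
    rw [← integral_indicator measurableSet_closedBall]
    congr 1
    funext x
    by_cases hx : x ∈ closedBall (0 : Euc (n+1)) 1
    · rw [Set.indicator_of_mem hx, hf₀,
        Set.indicator_of_mem (Set.mem_Icc.mpr ⟨norm_nonneg x, mem_closedBall_zero_iff.1 hx⟩)]
    · rw [Set.indicator_of_notMem hx, hf₀, Set.indicator_of_notMem]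
      intro hmem
      exact hx (mem_closedBall_zero_iff.2 hmem.2)
  rw [hind, integral_fun_norm_addHaar volume f₀]
  rw [finrank_euclideanSpace_fin]
  have hball : (volume (ball (0 : Euc (n+1)) 1)).toReal = (VB (n+1)).toReal := by
    rw [VB, Measure.addHaar_closedBall_eq_addHaar_ball]
  have hio : ∫ y in Ioi (0:ℝ), y ^ (n + 1 - 1) • f₀ y = ∫ r in (0:ℝ)..1, r ^ n * Gfun n r := by
    have hy : ∀ y : ℝ, y ^ (n + 1 - 1) • f₀ y
        = Set.indicator (Icc (0:ℝ) 1) (fun y => y ^ n * Gfun n y) y := by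
      intro y
      rw [hf₀]
      by_cases hmem : y ∈ Icc (0:ℝ) 1
      · rw [Set.indicator_of_mem hmem, Set.indicator_of_mem hmem]
        simp [smul_eq_mul]
      · rw [Set.indicator_of_notMem hmem, Set.indicator_of_notMem hmem, smul_zero]
    simp_rw [hy]
    rw [setIntegral_indicator measurableSet_Icc]
    have hset : Ioi (0:ℝ) ∩ Icc 0 1 = Ioc 0 1 := by
      ext y
      simp only [Set.mem_inter_iff, Set.mem_Ioi, Set.mem_Icc, Set.mem_Ioc]
      constructor
      · rintro ⟨h1, _, h3⟩; exact ⟨h1, h3⟩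
      · rintro ⟨h1, h2⟩; exact ⟨h1, le_of_lt h1, h2⟩
    rw [hset, intervalIntegral.integral_of_le zero_le_one]
  rw [hio, measureReal_def, hball, nsmul_eq_mul, smul_eq_mul]
  push_cast
  ring

lemma W_formula (n : ℕ) :
    (volume {p : Euc (n+1) × Euc (n+1) |
        p.1 ∈ closedBall 0 1 ∧ p.2 ∈ closedBall 0 1 ∧ dist p.1 p.2 ≤ 1}).toReal
      = 3 * Sd (n+1) * (VB (n+1)).toReal * (VB n).toReal := by
  rw [W_eq, ENNReal.toReal_mul, ENNReal.toReal_ofReal, radial]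
  · have h : ((n:ℝ)+1) * (VB (n+1)).toReal * ∫ r in (0:ℝ)..1, r ^ n * Gfun n r
        = (VB (n+1)).toReal * (((n:ℝ)+1) * ∫ r in (0:ℝ)..1, r ^ n * Gfun n r) := by ring
    rw [h, byparts]
    ring
  · rw [radial]
    have hge : 0 ≤ ∫ r in (0:ℝ)..1, r ^ n * Gfun n r := by
      apply intervalIntegral.integral_nonneg zero_le_one
      intro u hu
      exact mul_nonneg (pow_nonneg hu.1 n) (Gfun_nonneg n (by linarith [hu.2]))
    have := ENNReal.toReal_nonneg (a := VB (n+1))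
    positivity

def Pd (d : ℕ) : ℝ := ∫ θ in (π/3)..(π/2), Real.sin θ ^ d

lemma sin_pow_ii (d : ℕ) (a b : ℝ) :
    IntervalIntegrable (fun θ => Real.sin θ ^ d) volume a b :=
  (Real.continuous_sin.pow d).intervalIntegrable a b

lemma T_split (d : ℕ) : Td d = Sd d + Pd d := by
  rw [Td, Sd, Pd]
  rw [← intervalIntegral.integral_add_adjacent_intervals (sin_pow_ii d 0 (π/3))
    (sin_pow_ii d (π/3) (π/2))]

lemma Sd_nonneg (d : ℕ) : 0 ≤ Sd d := by
  apply intervalIntegral.integral_nonneg (by linarith [pi_pos])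
  intro u hu
  exact pow_nonneg (Real.sin_nonneg_of_nonneg_of_le_pi hu.1 (by linarith [hu.2, pi_pos])) d

lemma Pd_nonneg (d : ℕ) : 0 ≤ Pd d := by
  apply intervalIntegral.integral_nonneg (by linarith [pi_pos])
  intro u hu
  have h1 : 0 ≤ u := le_trans (by linarith [pi_pos]) hu.1
  exact pow_nonneg (Real.sin_nonneg_of_nonneg_of_le_pi h1 (by linarith [hu.2, pi_pos])) d

lemma Sd_ge (d : ℕ) : (2/π)^d * ((π/3)^(d+1) / (d+1)) ≤ Sd d := by
  have h : ∫ θ in (0:ℝ)..(π/3), (2/π)^d * θ^d ≤ Sd d := by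
    apply intervalIntegral.integral_mono_on (by linarith [pi_pos])
    · exact (continuous_const.mul (continuous_pow d)).intervalIntegrable _ _
    · exact sin_pow_ii d _ _
    · intro θ hθ
      have h0 : 0 ≤ θ := hθ.1
      have h2 : θ ≤ π/2 := by linarith [hθ.2, pi_pos]
      have hs := Real.mul_le_sin h0 h2
      calc (2/π)^d * θ^d = (2/π*θ)^d := by rw [mul_pow]
        _ ≤ Real.sin θ ^ d := pow_le_pow_left₀ (by positivity) hs d
  refine le_trans (le_of_eq ?_) h
  rw [intervalIntegral.integral_const_mul, integral_pow]
  rw [zero_pow (Nat.succ_ne_zero d), sub_zero]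

lemma sin_mem_bounds {θ : ℝ} (h1 : 0 ≤ θ) (h2 : θ ≤ π/2) :
    Real.sin θ ≤ 1 ∧ 0 ≤ Real.sin θ :=
  ⟨Real.sin_le_one θ, Real.sin_nonneg_of_nonneg_of_le_pi h1 (by linarith [pi_pos])⟩

lemma Td_le (d : ℕ) : Td d ≤ π/2 := by
  have h : Td d ≤ ∫ _ in (0:ℝ)..(π/2), (1:ℝ) := by
    apply intervalIntegral.integral_mono_on (by linarith [pi_pos])
    · exact sin_pow_ii d _ _
    · exact continuous_const.intervalIntegrable _ _
    · intro θ hθ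
      obtain ⟨hs1, hs0⟩ := sin_mem_bounds hθ.1 hθ.2
      exact pow_le_one₀ hs0 hs1
  simpa using h

lemma Td_pos (d : ℕ) : 0 < Td d := by
  apply intervalIntegral.intervalIntegral_pos_of_pos_on (sin_pow_ii d 0 (π/2))
  · intro θ hθ
    have : 0 < Real.sin θ := Real.sin_pos_of_pos_of_lt_pi hθ.1 (by linarith [hθ.2, pi_pos])
    positivity
  · linarith [pi_pos]

lemma sin_le_sqrt3div2 {θ : ℝ} (h1 : 0 ≤ θ) (h2 : θ ≤ π/3) : Real.sin θ ≤ Real.sqrt 3 / 2 := by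
  rw [← Real.sin_pi_div_three]
  apply Real.strictMonoOn_sin.monotoneOn ⟨by linarith [pi_pos], by linarith [pi_pos]⟩
    ⟨by linarith [pi_pos], by linarith [pi_pos]⟩ h2

lemma sqrt3div2_le_sin {θ : ℝ} (h1 : π/3 ≤ θ) (h2 : θ ≤ π/2) : Real.sqrt 3 / 2 ≤ Real.sin θ := by
  rw [← Real.sin_pi_div_three]
  apply Real.strictMonoOn_sin.monotoneOn ⟨by linarith [pi_pos], by linarith [pi_pos]⟩
    ⟨by linarith [pi_pos], by linarith [pi_pos]⟩ h1

lemma Sd_succ_le (d : ℕ) : Sd (d+1) ≤ Real.sqrt 3 / 2 * Sd d := by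
  rw [Sd, Sd, ← intervalIntegral.integral_const_mul]
  apply intervalIntegral.integral_mono_on (by linarith [pi_pos])
  · exact sin_pow_ii (d+1) _ _
  · exact (continuous_const.mul (Real.continuous_sin.pow d)).intervalIntegrable _ _
  · intro θ hθ
    have h0 : 0 ≤ Real.sin θ :=
      Real.sin_nonneg_of_nonneg_of_le_pi hθ.1 (by linarith [hθ.2, pi_pos])
    have hle : Real.sin θ ≤ Real.sqrt 3 / 2 := sin_le_sqrt3div2 hθ.1 hθ.2
    calc Real.sin θ ^ (d+1) = Real.sin θ * Real.sin θ ^ d := by ring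
      _ ≤ Real.sqrt 3 / 2 * Real.sin θ ^ d :=
          mul_le_mul_of_nonneg_right hle (pow_nonneg h0 d)

lemma kappa_pos : 0 < 1/2 - Real.sqrt 3 / 2 * (π/6) := by
  have h3 : Real.sqrt 3 ≤ 1.74 := by
    rw [show (1.74:ℝ) = Real.sqrt (1.74^2) from (Real.sqrt_sq (by norm_num)).symm]
    apply Real.sqrt_le_sqrt
    norm_num
  have hpi : π < 3.15 := pi_lt_d2
  have hs : 0 ≤ Real.sqrt 3 := Real.sqrt_nonneg 3
  nlinarith

lemma Pd_succ_ge (d : ℕ) :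
    Real.sqrt 3 / 2 * Pd d + (Real.sqrt 3 / 2)^d * (1/2 - Real.sqrt 3 / 2 * (π/6))
      ≤ Pd (d+1) := by
  have key : ∫ θ in (π/3)..(π/2), (Real.sqrt 3 / 2 * Real.sin θ ^ d
        + (Real.sqrt 3 / 2)^d * (Real.sin θ - Real.sqrt 3 / 2)) ≤ Pd (d+1) := by
    apply intervalIntegral.integral_mono_on (by linarith [pi_pos])
    · apply IntervalIntegrable.add
      · exact (continuous_const.mul (Real.continuous_sin.pow d)).intervalIntegrable _ _
      · exact (continuous_const.mul (Real.continuous_sin.sub continuous_const)).intervalIntegrable _ _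
    · exact sin_pow_ii (d+1) _ _
    · intro θ hθ
      have h1 : 0 ≤ θ := le_trans (by linarith [pi_pos]) hθ.1
      have hge : Real.sqrt 3 / 2 ≤ Real.sin θ := sqrt3div2_le_sin hθ.1 hθ.2
      have hpow : (Real.sqrt 3 / 2)^d ≤ Real.sin θ ^ d :=
        pow_le_pow_left₀ (by positivity) hge d
      have h0 : 0 ≤ Real.sin θ := le_trans (by positivity) hge
      calc Real.sqrt 3 / 2 * Real.sin θ ^ d
            + (Real.sqrt 3 / 2)^d * (Real.sin θ - Real.sqrt 3 / 2)
          ≤ Real.sqrt 3 / 2 * Real.sin θ ^ d + Real.sin θ ^ d * (Real.sin θ - Real.sqrt 3 / 2) :=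
            by nlinarith [hpow, hge]
        _ = Real.sin θ ^ (d+1) := by ring
  refine le_trans (le_of_eq ?_) key
  rw [intervalIntegral.integral_add, intervalIntegral.integral_const_mul,
    intervalIntegral.integral_const_mul, intervalIntegral.integral_sub,
    integral_sin, intervalIntegral.integral_const]
  · rw [Real.cos_pi_div_three, Real.cos_pi_div_two, Pd]
    rw [smul_eq_mul]
    ring
  · exact Real.continuous_sin.intervalIntegrable _ _
  · exact continuous_const.intervalIntegrable _ _
  · exact (continuous_const.mul (Real.continuous_sin.pow d)).intervalIntegrable _ _
  · exact (continuous_const.mul (Real.continuous_sin.sub continuous_const)).intervalIntegrable _ _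

lemma VB_toReal_pos (d : ℕ) : 0 < (VB d).toReal :=
  ENNReal.toReal_pos (VB_pos d).ne' (VB_lt_top d).ne

lemma VB_succ_toReal (n : ℕ) :
    (VB (n+1)).toReal = 2 * Td (n+1) * (VB n).toReal := by
  rw [VB_succ, ENNReal.toReal_mul, ENNReal.toReal_ofReal (by linarith [Td_pos (n+1)])]

lemma prob_formula (n : ℕ) : ballPairProb (n+1) = 3/2 * (Sd (n+1) / Td (n+1)) := by
  rw [ballPairProb, W_formula n]
  have hV : (volume (closedBall (0 : Euc (n+1)) 1)).toReal = (VB (n+1)).toReal := rfl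
  rw [hV, VB_succ_toReal n]
  have ht := Td_pos (n+1)
  have hv := VB_toReal_pos n
  field_simp

lemma gap_ge (n : ℕ) :
    2 * (1/2 - Real.sqrt 3/2*(π/6)) / π * (1/Real.sqrt 3)^(n+1) / ((n:ℝ)+2)
      ≤ ballPairProb (n+1) - ballPairProb (n+2) := by
  have hkpos : 0 < 1/2 - Real.sqrt 3/2*(π/6) := kappa_pos
  set k : ℝ := 1/2 - Real.sqrt 3/2*(π/6) with hk
  have hprob : ballPairProb (n+1) - ballPairProb (n+2)
      = 3/2 * ((Sd (n+1) * Td (n+2) - Sd (n+2) * Td (n+1)) / (Td (n+1) * Td (n+2))) := by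
    rw [prob_formula n, show n+2 = (n+1)+1 from rfl, prob_formula (n+1)]
    have h1 := (Td_pos (n+1)).ne'
    have h2 := (Td_pos (n+2)).ne'
    field_simp
  have hN : Sd (n+1) * Td (n+2) - Sd (n+2) * Td (n+1)
      = Sd (n+1) * Pd (n+2) - Sd (n+2) * Pd (n+1) := by
    rw [T_split (n+1), T_split (n+2)]
    ring
  have hNge : Sd (n+1) * ((Real.sqrt 3/2)^(n+1) * k)
      ≤ Sd (n+1) * Pd (n+2) - Sd (n+2) * Pd (n+1) := by
    have h1 : Sd (n+1) * (Real.sqrt 3/2 * Pd (n+1) + (Real.sqrt 3/2)^(n+1) * k)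
        ≤ Sd (n+1) * Pd (n+2) :=
      mul_le_mul_of_nonneg_left (Pd_succ_ge (n+1)) (Sd_nonneg (n+1))
    have h2 : Sd (n+2) * Pd (n+1) ≤ (Real.sqrt 3/2 * Sd (n+1)) * Pd (n+1) :=
      mul_le_mul_of_nonneg_right (Sd_succ_le (n+1)) (Pd_nonneg (n+1))
    nlinarith
  have hNnonneg : 0 ≤ Sd (n+1) * Pd (n+2) - Sd (n+2) * Pd (n+1) := by
    have : 0 ≤ Sd (n+1) * ((Real.sqrt 3/2)^(n+1) * k) := by
      have := Sd_nonneg (n+1)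
      have h3 : (0:ℝ) ≤ (Real.sqrt 3/2)^(n+1) := by positivity
      positivity
    linarith
  have hdiv : (Sd (n+1) * Pd (n+2) - Sd (n+2) * Pd (n+1)) / (π/2 * (π/2))
      ≤ (Sd (n+1) * Pd (n+2) - Sd (n+2) * Pd (n+1)) / (Td (n+1) * Td (n+2)) := by
    apply div_le_div_of_nonneg_left hNnonneg
    · exact mul_pos (Td_pos (n+1)) (Td_pos (n+2))
    · apply mul_le_mul (Td_le (n+1)) (Td_le (n+2)) (Td_pos (n+2)).le
      linarith [pi_pos]
  have hs1low := Sd_ge (n+1)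
  -- combine
  have hmain : 3/2 * (((2/π)^(n+1) * ((π/3)^(n+1+1) / ((n+1:ℕ)+1)) * ((Real.sqrt 3/2)^(n+1) * k))
      / (π/2 * (π/2))) ≤ ballPairProb (n+1) - ballPairProb (n+2) := by
    rw [hprob, hN]
    have step1 : ((2/π)^(n+1) * ((π/3)^(n+1+1) / ((n+1:ℕ)+1)) * ((Real.sqrt 3/2)^(n+1) * k))
        ≤ Sd (n+1) * ((Real.sqrt 3/2)^(n+1) * k) := by
      apply mul_le_mul_of_nonneg_right hs1low
      positivity
    have step2 : ((2/π)^(n+1) * ((π/3)^(n+1+1) / ((n+1:ℕ)+1)) * ((Real.sqrt 3/2)^(n+1) * k))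
        / (π/2 * (π/2)) ≤ (Sd (n+1) * Pd (n+2) - Sd (n+2) * Pd (n+1)) / (Td (n+1) * Td (n+2)) := by
      refine le_trans ?_ hdiv
      have hden : (0:ℝ) < π/2 * (π/2) := by positivity
      exact (div_le_div_iff_of_pos_right hden).2 (le_trans step1 hNge)
    linarith
  refine le_trans (le_of_eq ?_) hmain
  -- algebraic identity
  have hpi := pi_pos
  have hs3 : Real.sqrt 3 * Real.sqrt 3 = 3 := Real.mul_self_sqrt (by norm_num)
  have hs3pos : 0 < Real.sqrt 3 := by positivity
  have hbase : 2/π * (π/3) * (Real.sqrt 3/2) = 1/Real.sqrt 3 := by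
    rw [eq_div_iff hs3pos.ne']
    field_simp
    linarith [hs3]
  have hprod : (2/π)^(n+1) * (π/3)^(n+1) * (Real.sqrt 3/2)^(n+1) = (1/Real.sqrt 3)^(n+1) := by
    rw [← mul_pow, ← mul_pow, hbase]
  have hcast : ((n+1:ℕ):ℝ)+1 = (n:ℝ)+2 := by push_cast; ring
  rw [hcast, pow_succ (π/3) (n+1)]
  have h2 : (0:ℝ) < (n:ℝ)+2 := by positivity
  calc 2 * k / π * (1/Real.sqrt 3)^(n+1) / ((n:ℝ)+2)
      = ((2/π)^(n+1) * (π/3)^(n+1) * (Real.sqrt 3/2)^(n+1)) * (2*k/(π*((n:ℝ)+2))) := by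
        rw [hprod]
        field_simp
    _ = 3/2 * ((2/π)^(n+1) * ((π/3)^(n+1) * (π/3) / ((n:ℝ)+2)) * ((Real.sqrt 3/2)^(n+1) * k)
          / (π/2 * (π/2))) := by
        field_simp

def gfun (d : ℕ) : ℝ :=
  (1/Real.sqrt 3)^d / ((d:ℝ)+1) * Real.Gamma (((d:ℝ)+3)/2) / (3:ℝ) ^ (((d:ℝ)+1)/2)

lemma gfun_pos (d : ℕ) : 0 < gfun d := by
  have h1 : 0 < Real.Gamma (((d:ℝ)+3)/2) := Real.Gamma_pos_of_pos (by positivity)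
  have h2 : (0:ℝ) < (3:ℝ) ^ (((d:ℝ)+1)/2) := Real.rpow_pos_of_pos (by norm_num) _
  have h3 : (0:ℝ) < 1/Real.sqrt 3 := by positivity
  rw [gfun]
  positivity

lemma gfun_rec (d : ℕ) : gfun (d+2) = gfun d * (((d:ℝ)+1)/18) := by
  have hG : Real.Gamma ((((d+2:ℕ):ℝ)+3)/2) = (((d:ℝ)+3)/2) * Real.Gamma (((d:ℝ)+3)/2) := by
    have h : (((d+2:ℕ):ℝ)+3)/2 = ((d:ℝ)+3)/2 + 1 := by push_cast; ring
    rw [h, Real.Gamma_add_one (by positivity)]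
  have hR : (3:ℝ) ^ ((((d+2:ℕ):ℝ)+1)/2) = (3:ℝ) ^ (((d:ℝ)+1)/2) * 3 := by
    have h : (((d+2:ℕ):ℝ)+1)/2 = ((d:ℝ)+1)/2 + 1 := by push_cast; ring
    rw [h, Real.rpow_add (by norm_num), Real.rpow_one]
  have hA : (1/Real.sqrt 3)^(d+2) = (1/Real.sqrt 3)^d * (1/3) := by
    have hs3 : Real.sqrt 3 * Real.sqrt 3 = 3 := Real.mul_self_sqrt (by norm_num)
    have h : (1/Real.sqrt 3) * (1/Real.sqrt 3) = 1/3 := by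
      rw [div_mul_div_comm, one_mul, hs3]
    calc (1/Real.sqrt 3)^(d+2) = (1/Real.sqrt 3)^d * ((1/Real.sqrt 3) * (1/Real.sqrt 3)) := by
          ring
      _ = (1/Real.sqrt 3)^d * (1/3) := by rw [h]
  rw [gfun, gfun, hG, hR, hA]
  have hc : ((d+2:ℕ):ℝ) + 1 = (d:ℝ) + 3 := by push_cast; ring
  rw [hc]
  have hRpos : (0:ℝ) < (3:ℝ) ^ (((d:ℝ)+1)/2) := Real.rpow_pos_of_pos (by norm_num) _
  have h1 : ((d:ℝ)+3) ≠ 0 := by positivity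
  have h2 : ((d:ℝ)+1) ≠ 0 := by positivity
  field_simp
  ring

lemma gfun_lower : ∃ m : ℝ, 0 < m ∧ ∀ d : ℕ, 1 ≤ d → m ≤ gfun d := by
  have hne : (Finset.Icc 1 18).Nonempty := ⟨1, by simp⟩
  set m := (Finset.Icc 1 18).inf' hne gfun with hm
  have hmpos : 0 < m := by
    rw [hm, Finset.lt_inf'_iff]
    exact fun b _ => gfun_pos b
  refine ⟨m, hmpos, ?_⟩
  intro d
  induction d using Nat.strong_induction_on with
  | _ d ih =>
    intro hd
    by_cases hle : d ≤ 18
    · exact Finset.inf'_le _ (Finset.mem_Icc.2 ⟨hd, hle⟩)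
    · push_neg at hle
      obtain ⟨e, rfl⟩ : ∃ e, d = e + 2 := ⟨d - 2, by omega⟩
      have ihe := ih e (by omega) (by omega)
      rw [gfun_rec e]
      have hfac : (1:ℝ) ≤ ((e:ℝ)+1)/18 := by
        have h17 : (17:ℝ) ≤ (e:ℝ) := by exact_mod_cast (by omega : 17 ≤ e)
        linarith
      calc m ≤ gfun e := ihe
        _ = gfun e * 1 := (mul_one _).symm
        _ ≤ gfun e * (((e:ℝ)+1)/18) := by
            apply mul_le_mul_of_nonneg_left hfac (gfun_pos e).le

theorem main : ∃ c : ℝ, 0 < c ∧ ∀ d : ℕ, 1 ≤ d →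
    ballPairProb d - ballPairProb (d + 1) ≥
      c * (3 : ℝ) ^ (((d : ℝ) + 1) / 2) / Real.Gamma (((d : ℝ) + 3) / 2) := by
  obtain ⟨m, hmpos, hmle⟩ := gfun_lower
  have hkpos : 0 < 1/2 - Real.sqrt 3/2*(π/6) := kappa_pos
  have hpi := pi_pos
  have hC0 : 0 < 2 * (1/2 - Real.sqrt 3/2*(π/6)) / π := by positivity
  refine ⟨2 * (1/2 - Real.sqrt 3/2*(π/6)) / π * m, mul_pos hC0 hmpos, ?_⟩
  intro d hd
  obtain ⟨n, rfl⟩ : ∃ n, d = n + 1 := ⟨d - 1, by omega⟩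
  have h1 := gap_ge n
  have h1' : 2 * (1/2 - Real.sqrt 3/2*(π/6)) / π * (1/Real.sqrt 3)^(n+1) / ((n:ℝ)+2)
      ≤ ballPairProb (n+1) - ballPairProb (n+1+1) := h1
  rw [ge_iff_le]
  refine le_trans ?_ h1'
  have hG : 0 < Real.Gamma ((((n+1:ℕ):ℝ)+3)/2) := by
    apply Real.Gamma_pos_of_pos; positivity
  have hR : (0:ℝ) < (3:ℝ) ^ ((((n+1:ℕ):ℝ)+1)/2) := Real.rpow_pos_of_pos (by norm_num) _
  have hg := hmle (n+1) (by omega)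
  have hgf : gfun (n+1) * ((3:ℝ) ^ ((((n+1:ℕ):ℝ)+1)/2)) / Real.Gamma ((((n+1:ℕ):ℝ)+3)/2)
      = (1/Real.sqrt 3)^(n+1) / ((n:ℝ)+2) := by
    rw [gfun]
    have hc : ((n+1:ℕ):ℝ) + 1 = (n:ℝ) + 2 := by push_cast; ring
    rw [hc]
    field_simp
  calc 2 * (1/2 - Real.sqrt 3/2*(π/6)) / π * m * (3:ℝ) ^ ((((n+1:ℕ):ℝ)+1)/2)
        / Real.Gamma ((((n+1:ℕ):ℝ)+3)/2)
      ≤ 2 * (1/2 - Real.sqrt 3/2*(π/6)) / π * gfun (n+1) * (3:ℝ) ^ ((((n+1:ℕ):ℝ)+1)/2)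
        / Real.Gamma ((((n+1:ℕ):ℝ)+3)/2) := by
        apply (div_le_div_iff_of_pos_right hG).2
        apply mul_le_mul_of_nonneg_right ?_ hR.le
        exact mul_le_mul_of_nonneg_left hg hC0.le
    _ = 2 * (1/2 - Real.sqrt 3/2*(π/6)) / π * ((1/Real.sqrt 3)^(n+1) / ((n:ℝ)+2)) := by
        rw [mul_assoc, mul_div_assoc, hgf]
    _ = 2 * (1/2 - Real.sqrt 3/2*(π/6)) / π * (1/Real.sqrt 3)^(n+1) / ((n:ℝ)+2) := by
        ring

end BallGap

/-- There is a constant `c > 0` with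
`w_d - w_{d+1} ≥ c · 3^((d+1)/2) / Γ((d+3)/2)` for all `d ≥ 1`. -/
theorem ballPairProb_gap_lower_bound :
    ∃ c : ℝ, 0 < c ∧ ∀ d : ℕ, 1 ≤ d →
      ballPairProb d - ballPairProb (d + 1) ≥
        c * (3 : ℝ) ^ (((d : ℝ) + 1) / 2) / Real.Gamma (((d : ℝ) + 3) / 2) := by
  exact BallGap.main

end
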